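/- Let i ∈ I_ℓ, let f : [0,1]^d → ℝ, and let ℓ', ℓ'' ∈ L with ℓ' ∼ ℓ''. Then the full grid interpolants of f of levels ℓ' and ℓ'' agree at the point x_{ℓ,i}: f_{ℓ'}(x_{ℓ,i}) = f_{ℓ''}(x_{ℓ,i}). (Lemma 4.6, identical values in equivalence classes.) -/

import Mathlib

/-- The hierarchical index set: `I_0 = {0,1}`, and for `ℓ ≥ 1` the odd indices in
`{1, …, 2^ℓ − 1}`. -/
def hierIndex (lam : ℕ) : Finset ℕ :=
  if lam = 0 then ({0, 1} : Finset ℕ)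
  else (Finset.range (2 ^ lam)).filter fun j => Odd j

/-- The grid point `x_{lam,j} = j / 2^lam ∈ [0,1]` (junk value for `j > 2^lam`). -/
noncomputable def gridPt (lam j : ℕ) : Set.Icc (0:ℝ) 1 :=
  if h : j ≤ 2 ^ lam then
    ⟨(j : ℝ) / 2 ^ lam, Set.mem_Icc.mpr
      ⟨by positivity, by
        rw [div_le_one (by positivity)]
        exact_mod_cast h⟩⟩
  else ⟨0, Set.mem_Icc.mpr ⟨le_rfl, zero_le_one⟩⟩

/-- The nodal space `V_{ℓ'}` spanned by the tensor products of the nodal basis of level `ℓ'`. -/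
noncomputable def nodalSpace (d : ℕ) (φ : ℕ → ℕ → Set.Icc (0:ℝ) 1 → ℝ)
    (ℓ' : Fin d → ℕ) : Submodule ℝ ((Fin d → Set.Icc (0:ℝ) 1) → ℝ) :=
  Submodule.span ℝ (Set.range fun i : (∀ t, Fin (2 ^ (ℓ' t) + 1)) =>
    fun x : Fin d → Set.Icc (0:ℝ) 1 => ∏ t, φ (ℓ' t) (i t) (x t))

lemma myProdIndicator {d : ℕ} {m : Fin d → ℕ} (a b : ∀ t, Fin (m t)) :
    (∏ t, if a t = b t then (1:ℝ) else 0) = if a = b then 1 else 0 := by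
  by_cases h : a = b
  · simp [h]
  · rw [if_neg h]
    obtain ⟨t, ht⟩ := Function.ne_iff.mp h
    exact Finset.prod_eq_zero (Finset.mem_univ t) (if_neg ht)

lemma tensor_uniq {d : ℕ} (m : Fin d → ℕ)
    (ψ : Fin d → ℕ → Set.Icc (0:ℝ) 1 → ℝ)
    (p : Fin d → ℕ → Set.Icc (0:ℝ) 1)
    (N : ∀ t, Fin (m t) → Fin (m t) → ℝ)
    (hN : ∀ t, ∀ a b : Fin (m t),
      (∑ j : Fin (m t), N t a j * ψ t b (p t j)) = if a = b then 1 else 0)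
    (g : (Fin d → Set.Icc (0:ℝ) 1) → ℝ)
    (hg : g ∈ Submodule.span ℝ (Set.range fun a : (∀ t, Fin (m t)) =>
      fun x : Fin d → Set.Icc (0:ℝ) 1 => ∏ t, ψ t (a t) (x t)))
    (hz : ∀ j : ∀ t, Fin (m t), g (fun t => p t (j t)) = 0) :
    g = 0 := by
  classical
  obtain ⟨c, hc⟩ := (Submodule.mem_span_range_iff_exists_fun ℝ).mp hg
  have h1 : ∀ x, g x = ∑ a : ∀ t, Fin (m t), c a * ∏ t, ψ t (a t) (x t) := by
    intro x
    rw [← hc]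
    simp [Finset.sum_apply]
  have key : ∀ a₀ : ∀ t, Fin (m t), c a₀ = 0 := by
    intro a₀
    have hcalc : (0:ℝ) = c a₀ := by
      calc (0:ℝ) = ∑ j : ∀ t, Fin (m t),
            (∏ t, N t (a₀ t) (j t)) * g (fun t => p t (j t)) := by simp [hz]
        _ = ∑ j : ∀ t, Fin (m t), ∑ a : ∀ t, Fin (m t),
              c a * ∏ t, (N t (a₀ t) (j t) * ψ t (a t) (p t (j t))) := by
            refine Finset.sum_congr rfl fun j _ => ?_
            rw [h1, Finset.mul_sum]
            refine Finset.sum_congr rfl fun a _ => ?_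
            rw [Finset.prod_mul_distrib]; ring
        _ = ∑ a : ∀ t, Fin (m t), c a * ∑ j : ∀ t, Fin (m t),
              ∏ t, (N t (a₀ t) (j t) * ψ t (a t) (p t (j t))) := by
            rw [Finset.sum_comm]
            simp [Finset.mul_sum]
        _ = ∑ a : ∀ t, Fin (m t), c a *
              ∏ t, ∑ k : Fin (m t), N t (a₀ t) k * ψ t (a t) (p t k) := by
            refine Finset.sum_congr rfl fun a _ => ?_
            congr 1
            rw [Finset.prod_univ_sum]
            simp
        _ = ∑ a : ∀ t, Fin (m t), c a * ∏ t, (if a₀ t = a t then (1:ℝ) else 0) := by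
            simp only [hN]
        _ = ∑ a : ∀ t, Fin (m t), c a * (if a₀ = a then 1 else 0) := by
            simp only [myProdIndicator]
        _ = c a₀ := by
            rw [Finset.sum_congr rfl (fun a _ => by rw [mul_ite, mul_one, mul_zero])]
            rw [Finset.sum_ite_eq]
            simp
    exact hcalc.symm
  rw [← hc]
  simp [key]

lemma myGridPtMulPow {lam mu j : ℕ} (h : lam ≤ mu) (hj : j ≤ 2 ^ lam) :
    gridPt mu (j * 2 ^ (mu - lam)) = gridPt lam j := by
  have hb : j * 2 ^ (mu - lam) ≤ 2 ^ mu := by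
    calc j * 2 ^ (mu - lam) ≤ 2 ^ lam * 2 ^ (mu - lam) := Nat.mul_le_mul_right _ hj
      _ = 2 ^ mu := by rw [← pow_add, Nat.add_sub_cancel' h]
  unfold gridPt
  rw [dif_pos hb, dif_pos hj]
  apply Subtype.ext
  show ((j * 2 ^ (mu - lam) : ℕ) : ℝ) / 2 ^ mu = (j : ℝ) / 2 ^ lam
  have h2 : (2:ℝ) ^ mu = 2 ^ lam * 2 ^ (mu - lam) := by
    rw [← pow_add, Nat.add_sub_cancel' h]
  push_cast
  rw [h2]
  rw [mul_comm ((2:ℝ) ^ lam), mul_comm ((j:ℝ))]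
  rw [mul_div_mul_left ((j:ℝ)) ((2:ℝ)^lam) (by positivity : ((2:ℝ)^(mu-lam)) ≠ 0)]

lemma myLeftInv (lam : ℕ) (φ : ℕ → ℕ → Set.Icc (0:ℝ) 1 → ℝ)
    (hinv : IsUnit (Matrix.of fun j j' : Fin (2 ^ lam + 1) =>
      φ lam (j' : ℕ) (gridPt lam (j : ℕ)))) :
    ∃ N : Fin (2 ^ lam + 1) → Fin (2 ^ lam + 1) → ℝ,
      ∀ a b : Fin (2 ^ lam + 1),
        (∑ j, N a j * φ lam (b : ℕ) (gridPt lam (j : ℕ))) = if a = b then 1 else 0 := by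
  refine ⟨fun a j => (↑hinv.unit⁻¹ : Matrix (Fin (2 ^ lam + 1)) (Fin (2 ^ lam + 1)) ℝ) a j,
    fun a b => ?_⟩
  have h : (↑hinv.unit⁻¹ : Matrix (Fin (2 ^ lam + 1)) (Fin (2 ^ lam + 1)) ℝ) *
      (Matrix.of fun j j' : Fin (2 ^ lam + 1) => φ lam (j' : ℕ) (gridPt lam (j : ℕ))) = 1 := by
    have h0 := hinv.unit.inv_mul
    rwa [IsUnit.unit_spec] at h0
  have h3 : ((↑hinv.unit⁻¹ : Matrix (Fin (2 ^ lam + 1)) (Fin (2 ^ lam + 1)) ℝ) *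
      (Matrix.of fun j j' : Fin (2 ^ lam + 1) => φ lam (j' : ℕ) (gridPt lam (j : ℕ)))) a b
      = (1 : Matrix (Fin (2 ^ lam + 1)) (Fin (2 ^ lam + 1)) ℝ) a b := by rw [h]
  rw [Matrix.mul_apply, Matrix.one_apply] at h3
  simpa using h3

/-- **Lemma 4.6 (identical values in equivalence classes).**
If `ℓ' ∼ ℓ''` in `L`, then the full grid interpolants of `f` of levels `ℓ'` and `ℓ''`
agree at the sparse grid point `x_{ℓ,i}`. -/
theorem identical_values_in_equivalence_classes
    (d n : ℕ) (hd : 1 ≤ d)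
    (φ : ℕ → ℕ → Set.Icc (0:ℝ) 1 → ℝ)
    (hinv : ∀ lam : ℕ, IsUnit (Matrix.of fun j j' : Fin (2 ^ lam + 1) =>
      φ lam (j' : ℕ) (gridPt lam (j : ℕ))))
    (ℓ : Fin d → ℕ) (hℓ : (∑ t, ℓ t) ≤ n)
    (i : Fin d → ℕ) (hi : ∀ t, i t ∈ hierIndex (ℓ t))
    (f : (Fin d → Set.Icc (0:ℝ) 1) → ℝ)
    (F : (Fin d → ℕ) → ((Fin d → Set.Icc (0:ℝ) 1) → ℝ))
    (hFmem : ∀ ℓ', F ℓ' ∈ nodalSpace d φ ℓ')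
    (hFinterp : ∀ ℓ' : Fin d → ℕ, ∀ j : (∀ t, Fin (2 ^ (ℓ' t) + 1)),
      F ℓ' (fun t => gridPt (ℓ' t) (j t)) = f (fun t => gridPt (ℓ' t) (j t)))
    (ℓ' ℓ'' : Fin d → ℕ)
    (hℓ'L : (∃ q < d, (∑ t, (ℓ' t : ℤ)) = (n : ℤ) - q) ∧ ∃ t, ℓ' t < ℓ t)
    (hℓ''L : (∃ q < d, (∑ t, (ℓ'' t : ℤ)) = (n : ℤ) - q) ∧ ∃ t, ℓ'' t < ℓ t)
    (hsim : ∀ t, ¬(ℓ' t = ℓ'' t ∧ ℓ' t < ℓ t) → ℓ t ≤ min (ℓ' t) (ℓ'' t)) :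
    F ℓ' (fun t => gridPt (ℓ t) (i t)) = F ℓ'' (fun t => gridPt (ℓ t) (i t)) := by
  classical
  set T : Fin d → Prop := fun t => ℓ' t = ℓ'' t ∧ ℓ' t < ℓ t with hTdef
  have hle' : ∀ t, ¬ T t → ℓ t ≤ ℓ' t := fun t h =>
    le_trans (hsim t h) (min_le_left _ _)
  have hle'' : ∀ t, ¬ T t → ℓ t ≤ ℓ'' t := fun t h =>
    le_trans (hsim t h) (min_le_right _ _)
  have hib : ∀ t, i t ≤ 2 ^ (ℓ t) := by
    intro t
    have h := hi t
    unfold hierIndex at h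
    by_cases h0 : ℓ t = 0
    · rw [if_pos h0] at h
      simp only [Finset.mem_insert, Finset.mem_singleton] at h
      rcases h with h | h <;> simp [h, h0]
    · rw [if_neg h0] at h
      have := Finset.mem_range.mp (Finset.mem_filter.mp h).1
      omega
  set m : Fin d → ℕ := fun t => if T t then 2 ^ (ℓ' t) + 1 else 1 with hmdef
  have hmT : ∀ t, T t → m t = 2 ^ (ℓ' t) + 1 := fun t h => by
    rw [hmdef]; exact if_pos h
  have hmN : ∀ t, ¬ T t → m t = 1 := fun t h => by
    rw [hmdef]; exact if_neg h
  have hm1 : ∀ t, 0 < m t := by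
    intro t
    by_cases h : T t
    · rw [hmT t h]; exact Nat.succ_pos _
    · rw [hmN t h]; exact Nat.one_pos
  set ψ : Fin d → ℕ → Set.Icc (0:ℝ) 1 → ℝ :=
    fun t j x => if T t then φ (ℓ' t) j x else 1 with hψdef
  set p : Fin d → ℕ → Set.Icc (0:ℝ) 1 :=
    fun t j => if T t then gridPt (ℓ' t) j else gridPt (ℓ t) (i t) with hpdef
  set P : (Fin d → Set.Icc (0:ℝ) 1) → (Fin d → Set.Icc (0:ℝ) 1) :=
    fun y t => if T t then y t else gridPt (ℓ t) (i t) with hPdef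
  have hψT : ∀ t, T t → ∀ j x, ψ t j x = φ (ℓ' t) j x := fun t h j x => by
    rw [hψdef]; exact if_pos h
  have hψN : ∀ t, ¬ T t → ∀ j x, ψ t j x = 1 := fun t h j x => by
    rw [hψdef]; exact if_neg h
  have hpT : ∀ t, T t → ∀ j, p t j = gridPt (ℓ' t) j := fun t h j => by
    rw [hpdef]; exact if_pos h
  have hpN : ∀ t, ¬ T t → ∀ j, p t j = gridPt (ℓ t) (i t) := fun t h j => by
    rw [hpdef]; exact if_neg h
  have hPT : ∀ t, T t → ∀ y, P y t = y t := fun t h y => by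
    rw [hPdef]; exact if_pos h
  have hPN : ∀ t, ¬ T t → ∀ y, P y t = gridPt (ℓ t) (i t) := fun t h y => by
    rw [hPdef]; exact if_neg h
  -- membership of the substituted interpolants
  have memB : ∀ L : Fin d → ℕ, (∀ t, T t → L t = ℓ' t) → ∀ g,
      g ∈ nodalSpace d φ L →
      (fun y => g (P y)) ∈ Submodule.span ℝ (Set.range fun a : (∀ t, Fin (m t)) =>
        fun x : Fin d → Set.Icc (0:ℝ) 1 => ∏ t, ψ t (a t) (x t)) := by
    intro L hL g hg
    have hmap := Submodule.mem_map_of_mem (f := LinearMap.funLeft ℝ ℝ P) hg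
    rw [nodalSpace, Submodule.map_span, ← Set.range_comp] at hmap
    have hle : Submodule.span ℝ (Set.range ((LinearMap.funLeft ℝ ℝ P) ∘
        fun a : (∀ t, Fin (2 ^ (L t) + 1)) =>
          fun x : Fin d → Set.Icc (0:ℝ) 1 => ∏ t, φ (L t) (a t) (x t)))
        ≤ Submodule.span ℝ (Set.range fun a : (∀ t, Fin (m t)) =>
          fun x : Fin d → Set.Icc (0:ℝ) 1 => ∏ t, ψ t (a t) (x t)) := by
      rw [Submodule.span_le]
      rintro _ ⟨a, rfl⟩
      have hbd : ∀ t, (if T t then ((a t : ℕ)) else 0) < m t := by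
        intro t
        by_cases h : T t
        · rw [if_pos h, hmT t h, ← hL t h]; exact (a t).isLt
        · rw [if_neg h]; exact hm1 t
      set ahat : ∀ t, Fin (m t) := fun t => ⟨if T t then ((a t : ℕ)) else 0, hbd t⟩ with hahatdef
      have heq : (LinearMap.funLeft ℝ ℝ P ∘ fun a : (∀ t, Fin (2 ^ (L t) + 1)) =>
            fun x : Fin d → Set.Icc (0:ℝ) 1 => ∏ t, φ (L t) (a t) (x t)) a
          = (∏ t, if T t then (1:ℝ) else φ (L t) (a t) (gridPt (ℓ t) (i t))) •
            (fun x : Fin d → Set.Icc (0:ℝ) 1 => ∏ t, ψ t (ahat t) (x t)) := by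
        funext y
        simp only [Function.comp_apply, LinearMap.funLeft_apply, Pi.smul_apply, smul_eq_mul]
        rw [← Finset.prod_mul_distrib]
        refine Finset.prod_congr rfl fun t _ => ?_
        have hahatval : (ahat t : ℕ) = if T t then ((a t : ℕ)) else 0 := by rw [hahatdef]
        by_cases h : T t
        · rw [if_pos h, one_mul, hψT t h, hahatval, if_pos h, hPT t h]
          exact congrFun (congrFun (congrArg φ (hL t h)) _) _
        · rw [if_neg h, hψN t h, mul_one, hPN t h]
      rw [heq]
      exact Submodule.smul_mem _ _ (Submodule.subset_span ⟨ahat, rfl⟩)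
    exact hle hmap
  -- interpolation at the mixed grid points
  have interp : ∀ L : Fin d → ℕ, (∀ t, T t → L t = ℓ' t) → (∀ t, ¬ T t → ℓ t ≤ L t) →
      ∀ j : ∀ t, Fin (m t),
        F L (fun t => p t (j t)) = f (fun t => p t (j t)) := by
    intro L hL hge j
    have hbound : ∀ t, (if T t then ((j t : ℕ)) else i t * 2 ^ (L t - ℓ t)) < 2 ^ (L t) + 1 := by
      intro t
      by_cases h : T t
      · rw [if_pos h]
        have hh : m t = 2 ^ (L t) + 1 := by rw [hmT t h, hL t h]
        exact lt_of_lt_of_eq (j t).isLt hh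
      · rw [if_neg h]
        calc i t * 2 ^ (L t - ℓ t) ≤ 2 ^ (ℓ t) * 2 ^ (L t - ℓ t) :=
              Nat.mul_le_mul_right _ (hib t)
          _ = 2 ^ (L t) := by rw [← pow_add, Nat.add_sub_cancel' (hge t h)]
          _ < 2 ^ (L t) + 1 := Nat.lt_succ_self _
    have hpt : (fun t => gridPt (L t)
        (((fun t => (⟨_, hbound t⟩ : Fin (2 ^ (L t) + 1))) t : ℕ))) = fun t => p t (j t) := by
      funext t
      by_cases h : T t
      · show gridPt (L t) (if T t then ((j t : ℕ)) else i t * 2 ^ (L t - ℓ t)) = p t (j t)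
        rw [if_pos h, hpT t h, hL t h]
      · show gridPt (L t) (if T t then ((j t : ℕ)) else i t * 2 ^ (L t - ℓ t)) = p t (j t)
        rw [if_neg h, hpN t h]
        exact myGridPtMulPow (hge t h) (hib t)
    have := hFinterp L (fun t => ⟨_, hbound t⟩)
    rwa [hpt] at this
  -- the inverse matrices
  have hNex : ∀ t : Fin d, ∃ N : Fin (m t) → Fin (m t) → ℝ,
      ∀ a b : Fin (m t),
        (∑ j : Fin (m t), N a j * ψ t b (p t j)) = if a = b then 1 else 0 := by
    intro t
    by_cases ht : T t
    · have hm : m t = 2 ^ (ℓ' t) + 1 := hmT t ht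
      obtain ⟨N', hN'⟩ := myLeftInv (ℓ' t) φ (hinv (ℓ' t))
      refine ⟨fun a j => N' (Fin.cast hm a) (Fin.cast hm j), fun a b => ?_⟩
      have hsum : (∑ j : Fin (m t), N' (Fin.cast hm a) (Fin.cast hm j) * ψ t b (p t j))
          = ∑ j' : Fin (2 ^ (ℓ' t) + 1), N' (Fin.cast hm a) j' *
              φ (ℓ' t) ((Fin.cast hm b : ℕ)) (gridPt (ℓ' t) (j' : ℕ)) := by
        refine Fintype.sum_equiv (finCongr hm) _ _ fun j => ?_
        rw [hψT t ht, hpT t ht]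
        rfl
      rw [hsum, hN' (Fin.cast hm a) (Fin.cast hm b)]
      have : (Fin.cast hm a = Fin.cast hm b) ↔ (a = b) := by
        constructor
        · intro h; exact Fin.ext (by simpa [Fin.ext_iff] using h)
        · intro h; rw [h]
      simp [this]
    · have hm : m t = 1 := hmN t ht
      refine ⟨fun _ _ => 1, fun a b => ?_⟩
      have hab : a = b := by
        apply Fin.ext
        have h1 := lt_of_lt_of_eq a.isLt hm
        have h2 := lt_of_lt_of_eq b.isLt hm
        omega
      rw [if_pos hab]
      have hone : ∀ j : Fin (m t), (1:ℝ) * ψ t b (p t j) = 1 := by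
        intro j; rw [hψN t ht, mul_one]
      rw [Finset.sum_congr rfl (fun j _ => hone j)]
      simp [hm]
  choose N hN using hNex
  -- the difference vanishes at all mixed grid points
  have hzz : ∀ j : ∀ t, Fin (m t),
      (fun y => F ℓ' (P y) - F ℓ'' (P y)) (fun t => p t (j t)) = 0 := by
    intro j
    have hPfix : P (fun t => p t ((j t : ℕ))) = fun t => p t ((j t : ℕ)) := by
      funext t
      by_cases h : T t
      · rw [hPT t h (fun t => p t ((j t : ℕ)))]
      · rw [hPN t h (fun t => p t ((j t : ℕ))), hpN t h]
    dsimp only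
    rw [hPfix, interp ℓ' (fun t _ => rfl) hle' j,
      interp ℓ'' (fun t ht => ht.1.symm) hle'' j, sub_self]
  have hgmem : (fun y => F ℓ' (P y) - F ℓ'' (P y)) ∈
      Submodule.span ℝ (Set.range fun a : (∀ t, Fin (m t)) =>
        fun x : Fin d → Set.Icc (0:ℝ) 1 => ∏ t, ψ t (a t) (x t)) := by
    have := Submodule.sub_mem _ (memB ℓ' (fun t _ => rfl) (F ℓ') (hFmem ℓ'))
      (memB ℓ'' (fun t ht => ht.1.symm) (F ℓ'') (hFmem ℓ''))
    exact this
  have hzero := tensor_uniq m ψ p N hN _ hgmem hzz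
  have hfin := congrFun hzero (fun t => gridPt (ℓ t) (i t))
  have hPy0 : P (fun t => gridPt (ℓ t) (i t)) = fun t => gridPt (ℓ t) (i t) := by
    funext t
    by_cases h : T t
    · rw [hPT t h (fun t => gridPt (ℓ t) (i t))]
    · rw [hPN t h (fun t => gridPt (ℓ t) (i t))]
  simp only [Pi.zero_apply] at hfin
  rw [hPy0] at hfin
  linarith [hfin]
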